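/- arXiv:2012.12449 — 4 statements merged into one kernel-verified Lean document; each statement's English description precedes it below -/
import Mathlib

section
/- Let α be a nonempty finite type and let μ be a probability distribution on α × Bool × Bool with coordinate random variables A, X, Y. Assume (i) P(A=a) > 0 for every a ∈ α, (ii) A and Y are conditionally independent given X, and (iii) X and Y are not independent. Then there exists y ∈ {0,1} such that max_{a} P(Y=y|A=a) > 0, min_{a} P(Y=y|A=a) < 1, and (P(Y=y) − min_{a} P(Y=y|A=a)) / (1 − min_{a} P(Y=y|A=a)) ≤ P(X=1) ≤ P(Y=y) / (max_{a} P(Y=y|A=a)). (Proposition 3, validity of the bounds.) -/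
open Classical in
/-- Probability of an event `E` under a finitely supported distribution `μ`. -/
noncomputable def pr {Ω : Type*} [Fintype Ω] (μ : Ω → ℝ) (E : Ω → Prop) : ℝ :=
  ∑ ω, if E ω then μ ω else 0

/-- Conditional probability `P(E | F) = P(E ∧ F) / P(F)`. -/
noncomputable def cpr {Ω : Type*} [Fintype Ω] (μ : Ω → ℝ) (E F : Ω → Prop) : ℝ :=
  pr μ (fun ω => E ω ∧ F ω) / pr μ F

section helpers
variable {Ω : Type*} [Fintype Ω] (μ : Ω → ℝ)

lemma pr_nonneg (hnn : ∀ ω, 0 ≤ μ ω) (E : Ω → Prop) : 0 ≤ pr μ E := by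
  unfold pr
  refine Finset.sum_nonneg fun ω _ => ?_
  split
  · exact hnn ω
  · exact le_refl 0

lemma pr_congr {E F : Ω → Prop} (h : ∀ ω, E ω ↔ F ω) : pr μ E = pr μ F := by
  unfold pr
  exact Finset.sum_congr rfl fun ω _ => by classical rw [if_congr (h ω) rfl rfl]

lemma pr_mono (hnn : ∀ ω, 0 ≤ μ ω) {E F : Ω → Prop} (h : ∀ ω, E ω → F ω) :
    pr μ E ≤ pr μ F := by
  unfold pr
  refine Finset.sum_le_sum fun ω _ => ?_
  by_cases hE : E ω
  · simp [hE, h ω hE, hnn ω]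
  · simp only [hE, if_false]
    split
    · exact hnn ω
    · exact le_refl 0

lemma pr_split (E P : Ω → Prop) :
    pr μ E = pr μ (fun ω => E ω ∧ P ω) + pr μ (fun ω => E ω ∧ ¬ P ω) := by
  classical
  unfold pr
  rw [← Finset.sum_add_distrib]
  refine Finset.sum_congr rfl fun ω _ => ?_
  by_cases hE : E ω <;> by_cases hP : P ω <;> simp [hE, hP]

lemma pr_fiber {β : Type*} [Fintype β] (E : Ω → Prop) (f : Ω → β) :
    pr μ E = ∑ b, pr μ (fun ω => E ω ∧ f ω = b) := by
  classical
  unfold pr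
  rw [Finset.sum_comm]
  refine Finset.sum_congr rfl fun ω _ => ?_
  by_cases hE : E ω <;> simp [hE]

lemma pr_total (hsum : ∑ ω, μ ω = 1) : pr μ (fun _ => True) = 1 := by
  unfold pr; simpa using hsum

lemma pr_bool_split2 (E : Ω → Prop) (f : Ω → Bool) (x : Bool) :
    pr μ E = pr μ (fun ω => E ω ∧ f ω = x) + pr μ (fun ω => E ω ∧ f ω = !x) := by
  rw [pr_split μ E (fun ω => f ω = x)]
  congr 1
  exact pr_congr μ fun ω => by cases hfx : f ω <;> cases x <;> simp [hfx]

lemma cpr_mul {E F : Ω → Prop} (h : pr μ F ≠ 0) :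
    pr μ (fun ω => E ω ∧ F ω) = pr μ F * cpr μ E F := by
  unfold cpr
  field_simp

lemma cpr_nonneg (hnn : ∀ ω, 0 ≤ μ ω) (E F : Ω → Prop) : 0 ≤ cpr μ E F := by
  unfold cpr
  have h1 := pr_nonneg μ hnn (fun ω => E ω ∧ F ω)
  have h2 := pr_nonneg μ hnn F
  positivity

lemma cpr_le_one (hnn : ∀ ω, 0 ≤ μ ω) (E F : Ω → Prop) (hF : 0 < pr μ F) :
    cpr μ E F ≤ 1 := by
  unfold cpr
  rw [div_le_one hF]
  exact pr_mono μ hnn fun ω h => h.2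

end helpers

lemma cpr_Y_not {α : Type*} [Fintype α] (μ : α × Bool × Bool → ℝ)
    (F : α × Bool × Bool → Prop) (hF : pr μ F ≠ 0) (y : Bool) :
    cpr μ (fun ω => ω.2.2 = !y) F = 1 - cpr μ (fun ω => ω.2.2 = y) F := by
  have hsplit := pr_bool_split2 μ F (fun ω => ω.2.2) y
  unfold cpr
  rw [pr_congr μ (show ∀ ω : α × Bool × Bool, ((ω.2.2 = !y) ∧ F ω) ↔ (F ω ∧ ω.2.2 = !y)
        from fun _ => and_comm),
      pr_congr μ (show ∀ ω : α × Bool × Bool, ((ω.2.2 = y) ∧ F ω) ↔ (F ω ∧ ω.2.2 = y)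
        from fun _ => and_comm)]
  field_simp
  linarith

/-- Proposition 3 (validity of the bounds). -/
theorem stmt0 {α : Type*} [Fintype α] [Nonempty α]
    (μ : α × Bool × Bool → ℝ)
    (hnn : ∀ ω, 0 ≤ μ ω) (hsum : ∑ ω, μ ω = 1)
    (hA : ∀ a : α, 0 < pr μ (fun ω => ω.1 = a))
    (hCI : ∀ (a : α) (y x : Bool), 0 < pr μ (fun ω => ω.2.1 = x) →
      cpr μ (fun ω => ω.1 = a ∧ ω.2.2 = y) (fun ω => ω.2.1 = x) =
        cpr μ (fun ω => ω.1 = a) (fun ω => ω.2.1 = x) *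
          cpr μ (fun ω => ω.2.2 = y) (fun ω => ω.2.1 = x))
    (hdep : ¬ ∀ x y : Bool,
      pr μ (fun ω => ω.2.1 = x ∧ ω.2.2 = y) =
        pr μ (fun ω => ω.2.1 = x) * pr μ (fun ω => ω.2.2 = y)) :
    ∃ y : Bool,
      0 < Finset.univ.sup' Finset.univ_nonempty
            (fun a : α => cpr μ (fun ω => ω.2.2 = y) (fun ω => ω.1 = a)) ∧
      Finset.univ.inf' Finset.univ_nonempty
            (fun a : α => cpr μ (fun ω => ω.2.2 = y) (fun ω => ω.1 = a)) < 1 ∧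
      (pr μ (fun ω => ω.2.2 = y) -
          Finset.univ.inf' Finset.univ_nonempty
            (fun a : α => cpr μ (fun ω => ω.2.2 = y) (fun ω => ω.1 = a))) /
        (1 - Finset.univ.inf' Finset.univ_nonempty
            (fun a : α => cpr μ (fun ω => ω.2.2 = y) (fun ω => ω.1 = a))) ≤
        pr μ (fun ω => ω.2.1 = true) ∧
      pr μ (fun ω => ω.2.1 = true) ≤
        pr μ (fun ω => ω.2.2 = y) /
          Finset.univ.sup' Finset.univ_nonempty
            (fun a : α => cpr μ (fun ω => ω.2.2 = y) (fun ω => ω.1 = a)) := by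
  classical
  -- total probability of X
  have htot : pr μ (fun ω : α × Bool × Bool => ω.2.1 = false) +
      pr μ (fun ω : α × Bool × Bool => ω.2.1 = true) = 1 := by
    have h := pr_bool_split2 μ (fun _ : α × Bool × Bool => True) (fun ω => ω.2.1) false
    rw [pr_total μ hsum] at h
    simp only [Bool.not_false, true_and] at h
    linarith
  -- both marginals of X are positive
  have hXpos : ∀ x : Bool, 0 < pr μ (fun ω : α × Bool × Bool => ω.2.1 = x) := by
    intro x
    rcases lt_or_eq_of_le (pr_nonneg μ hnn (fun ω : α × Bool × Bool => ω.2.1 = x)) with h | h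
    · exact h
    exfalso
    apply hdep
    have h0 : pr μ (fun ω : α × Bool × Bool => ω.2.1 = x) = 0 := h.symm
    have hz : ∀ E : α × Bool × Bool → Prop,
        pr μ (fun ω => ω.2.1 = x ∧ E ω) = 0 := by
      intro E
      have h1 : pr μ (fun ω : α × Bool × Bool => ω.2.1 = x ∧ E ω) ≤ 0 :=
        h0 ▸ pr_mono μ hnn (fun ω hh => hh.1)
      exact le_antisymm h1 (pr_nonneg μ hnn _)
    have hz' : ∀ E : α × Bool × Bool → Prop,
        pr μ (fun ω => E ω ∧ ω.2.1 = x) = 0 := by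
      intro E
      rw [pr_congr μ (show ∀ ω : α × Bool × Bool, (E ω ∧ ω.2.1 = x) ↔ (ω.2.1 = x ∧ E ω)
            from fun _ => and_comm)]
      exact hz E
    have hother : pr μ (fun ω : α × Bool × Bool => ω.2.1 = !x) = 1 := by
      cases x
      · simp only [Bool.not_false]; linarith
      · simp only [Bool.not_true]; linarith
    intro x' y
    by_cases hx' : x' = x
    · subst hx'
      rw [hz, h0, zero_mul]
    · have hx'' : x' = !x := by
        cases x <;> cases x' <;> first | rfl | exact absurd rfl hx'
      subst hx''
      have hY : pr μ (fun ω : α × Bool × Bool => ω.2.2 = y) =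
          pr μ (fun ω : α × Bool × Bool => ω.2.2 = y ∧ ω.2.1 = !x) := by
        have h2 := pr_bool_split2 μ (fun ω : α × Bool × Bool => ω.2.2 = y) (fun ω => ω.2.1) x
        rw [hz'] at h2
        linarith
      rw [hother, one_mul, hY]
      exact pr_congr μ fun ω => and_comm
  -- the product formula for P(Y=y ∧ X=x)
  have hmul : ∀ (y x : Bool), pr μ (fun ω : α × Bool × Bool => ω.2.1 = x ∧ ω.2.2 = y) =
      pr μ (fun ω : α × Bool × Bool => ω.2.1 = x) *
        cpr μ (fun ω : α × Bool × Bool => ω.2.2 = y) (fun ω => ω.2.1 = x) := by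
    intro y x
    rw [pr_congr μ (show ∀ ω : α × Bool × Bool,
          (ω.2.1 = x ∧ ω.2.2 = y) ↔ (ω.2.2 = y ∧ ω.2.1 = x) from fun _ => and_comm)]
    exact cpr_mul μ (hXpos x).ne'
  -- decomposition of P(Y=y)
  have hYdec : ∀ y : Bool, pr μ (fun ω : α × Bool × Bool => ω.2.2 = y) =
      pr μ (fun ω : α × Bool × Bool => ω.2.1 = false) *
        cpr μ (fun ω : α × Bool × Bool => ω.2.2 = y) (fun ω => ω.2.1 = false) +
      pr μ (fun ω : α × Bool × Bool => ω.2.1 = true) *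
        cpr μ (fun ω : α × Bool × Bool => ω.2.2 = y) (fun ω => ω.2.1 = true) := by
    intro y
    have h2 := pr_bool_split2 μ (fun ω : α × Bool × Bool => ω.2.2 = y) (fun ω => ω.2.1) false
    simp only [Bool.not_false] at h2
    rw [h2, ← hmul y false, ← hmul y true]
    congr 1
    · exact pr_congr μ fun _ => and_comm
    · exact pr_congr μ fun _ => and_comm
  -- there is a y for which the conditionals on X differ
  have hne : ∃ y : Bool,
      cpr μ (fun ω : α × Bool × Bool => ω.2.2 = y) (fun ω => ω.2.1 = false) ≠
      cpr μ (fun ω : α × Bool × Bool => ω.2.2 = y) (fun ω => ω.2.1 = true) := by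
    by_contra h
    push_neg at h
    apply hdep
    intro x y
    rw [hmul y x]
    have hcommon : cpr μ (fun ω : α × Bool × Bool => ω.2.2 = y) (fun ω => ω.2.1 = x) =
        pr μ (fun ω : α × Bool × Bool => ω.2.2 = y) := by
      have hY := hYdec y
      rw [h y] at hY
      have : pr μ (fun ω : α × Bool × Bool => ω.2.2 = y) =
          cpr μ (fun ω : α × Bool × Bool => ω.2.2 = y) (fun ω => ω.2.1 = true) := by
        have hc1 : pr μ (fun ω : α × Bool × Bool => ω.2.1 = false) *
            cpr μ (fun ω : α × Bool × Bool => ω.2.2 = y) (fun ω => ω.2.1 = true) +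
            pr μ (fun ω : α × Bool × Bool => ω.2.1 = true) *
            cpr μ (fun ω : α × Bool × Bool => ω.2.2 = y) (fun ω => ω.2.1 = true) =
            (pr μ (fun ω : α × Bool × Bool => ω.2.1 = false) +
             pr μ (fun ω : α × Bool × Bool => ω.2.1 = true)) *
            cpr μ (fun ω : α × Bool × Bool => ω.2.2 = y) (fun ω => ω.2.1 = true) := by ring
        rw [hY, hc1, htot, one_mul]
      cases x
      · rw [h y, ← this]
      · rw [← this]
    rw [hcommon]
  obtain ⟨y0, hy0⟩ := hne
  -- choose y with q0 < q1
  have hchoice : ∃ y : Bool,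
      cpr μ (fun ω : α × Bool × Bool => ω.2.2 = y) (fun ω => ω.2.1 = false) <
      cpr μ (fun ω : α × Bool × Bool => ω.2.2 = y) (fun ω => ω.2.1 = true) := by
    rcases lt_or_gt_of_ne hy0 with h | h
    · exact ⟨y0, h⟩
    · refine ⟨!y0, ?_⟩
      rw [cpr_Y_not μ _ (hXpos false).ne' y0, cpr_Y_not μ _ (hXpos true).ne' y0]
      linarith
  obtain ⟨y, hq01⟩ := hchoice
  -- key conditional independence consequence, per a
  have hkey : ∀ a : α, pr μ (fun ω : α × Bool × Bool => ω.2.2 = y ∧ ω.1 = a) =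
      pr μ (fun ω : α × Bool × Bool => ω.1 = a ∧ ω.2.1 = false) *
        cpr μ (fun ω : α × Bool × Bool => ω.2.2 = y) (fun ω => ω.2.1 = false) +
      pr μ (fun ω : α × Bool × Bool => ω.1 = a ∧ ω.2.1 = true) *
        cpr μ (fun ω : α × Bool × Bool => ω.2.2 = y) (fun ω => ω.2.1 = true) := by
    intro a
    have hterm : ∀ x : Bool,
        pr μ (fun ω : α × Bool × Bool => (ω.1 = a ∧ ω.2.2 = y) ∧ ω.2.1 = x) =
        pr μ (fun ω : α × Bool × Bool => ω.1 = a ∧ ω.2.1 = x) *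
          cpr μ (fun ω : α × Bool × Bool => ω.2.2 = y) (fun ω => ω.2.1 = x) := by
      intro x
      rw [cpr_mul μ (E := fun ω : α × Bool × Bool => ω.1 = a ∧ ω.2.2 = y)
            (F := fun ω : α × Bool × Bool => ω.2.1 = x) (hXpos x).ne',
          hCI a y x (hXpos x),
          cpr_mul μ (E := fun ω : α × Bool × Bool => ω.1 = a)
            (F := fun ω : α × Bool × Bool => ω.2.1 = x) (hXpos x).ne']
      ring
    have hsp := pr_bool_split2 μ
      (fun ω : α × Bool × Bool => ω.1 = a ∧ ω.2.2 = y) (fun ω => ω.2.1) false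
    simp only [Bool.not_false] at hsp
    rw [pr_congr μ (show ∀ ω : α × Bool × Bool,
          (ω.2.2 = y ∧ ω.1 = a) ↔ (ω.1 = a ∧ ω.2.2 = y) from fun _ => and_comm),
        hsp, hterm false, hterm true]
  -- splitting of P(A=a)
  have hwa : ∀ a : α, pr μ (fun ω : α × Bool × Bool => ω.1 = a) =
      pr μ (fun ω : α × Bool × Bool => ω.1 = a ∧ ω.2.1 = false) +
      pr μ (fun ω : α × Bool × Bool => ω.1 = a ∧ ω.2.1 = true) := by
    intro a
    have h2 := pr_bool_split2 μ (fun ω : α × Bool × Bool => ω.1 = a) (fun ω => ω.2.1) false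
    simp only [Bool.not_false] at h2
    exact h2
  -- existence of a with positive weight on each side
  have hex : ∀ x : Bool, ∃ a : α, 0 < pr μ (fun ω : α × Bool × Bool => ω.1 = a ∧ ω.2.1 = x) := by
    intro x
    by_contra h
    push_neg at h
    have hz : ∀ a : α, pr μ (fun ω : α × Bool × Bool => ω.2.1 = x ∧ ω.1 = a) = 0 := by
      intro a
      rw [pr_congr μ (show ∀ ω : α × Bool × Bool,
            (ω.2.1 = x ∧ ω.1 = a) ↔ (ω.1 = a ∧ ω.2.1 = x) from fun _ => and_comm)]
      exact le_antisymm (h a) (pr_nonneg μ hnn _)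
    have hfib := pr_fiber μ (fun ω : α × Bool × Bool => ω.2.1 = x) (fun ω => ω.1)
    simp only [hz, Finset.sum_const_zero] at hfib
    exact absurd hfib (hXpos x).ne'
  -- now assemble
  refine ⟨y, ?_⟩
  set q0 := cpr μ (fun ω : α × Bool × Bool => ω.2.2 = y) (fun ω => ω.2.1 = false) with hq0def
  set q1 := cpr μ (fun ω : α × Bool × Bool => ω.2.2 = y) (fun ω => ω.2.1 = true) with hq1def
  set p := pr μ (fun ω : α × Bool × Bool => ω.2.1 = true) with hpdef
  set pY := pr μ (fun ω : α × Bool × Bool => ω.2.2 = y) with hpYdef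
  set c := fun a : α => cpr μ (fun ω : α × Bool × Bool => ω.2.2 = y) (fun ω => ω.1 = a) with hcdef
  set m := Finset.univ.inf' Finset.univ_nonempty c with hmdef
  set M := Finset.univ.sup' Finset.univ_nonempty c with hMdef
  have hp0 : 0 < p := hXpos true
  have hpf : pr μ (fun ω : α × Bool × Bool => ω.2.1 = false) = 1 - p := by linarith
  have h1p : 0 < 1 - p := by
    have := hXpos false
    linarith
  have hq0nn : 0 ≤ q0 := cpr_nonneg μ hnn _ _
  have hq1le1 : q1 ≤ 1 := cpr_le_one μ hnn _ _ (hXpos true)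
  have hq1pos : 0 < q1 := lt_of_le_of_lt hq0nn hq01
  have hq0lt1 : q0 < 1 := lt_of_lt_of_le hq01 hq1le1
  have hcform : ∀ a : α, c a =
      (pr μ (fun ω : α × Bool × Bool => ω.1 = a ∧ ω.2.1 = false) * q0 +
       pr μ (fun ω : α × Bool × Bool => ω.1 = a ∧ ω.2.1 = true) * q1) /
      pr μ (fun ω : α × Bool × Bool => ω.1 = a) := by
    intro a
    show cpr μ (fun ω : α × Bool × Bool => ω.2.2 = y) (fun ω => ω.1 = a) = _
    unfold cpr
    rw [hkey a]
  have hcb : ∀ a : α, q0 ≤ c a ∧ c a ≤ q1 := by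
    intro a
    have hw0 := pr_nonneg μ hnn (fun ω : α × Bool × Bool => ω.1 = a ∧ ω.2.1 = false)
    have hw1 := pr_nonneg μ hnn (fun ω : α × Bool × Bool => ω.1 = a ∧ ω.2.1 = true)
    have hwaa := hwa a
    have hwpos := hA a
    rw [hcform a]
    constructor
    · rw [le_div_iff₀ hwpos]
      nlinarith [mul_nonneg (sub_nonneg.mpr hq01.le) hw1]
    · rw [div_le_iff₀ hwpos]
      nlinarith [mul_nonneg (sub_nonneg.mpr hq01.le) hw0]
  have hmge : q0 ≤ m := Finset.le_inf' _ _ fun a _ => (hcb a).1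
  have hMle : M ≤ q1 := Finset.sup'_le _ _ fun a _ => (hcb a).2
  obtain ⟨a1, ha1⟩ := hex true
  obtain ⟨a0, ha0⟩ := hex false
  have hca1 : 0 < c a1 := by
    rw [hcform a1]
    apply div_pos _ (hA a1)
    have h1 : 0 < pr μ (fun ω : α × Bool × Bool => ω.1 = a1 ∧ ω.2.1 = true) * q1 :=
      mul_pos ha1 hq1pos
    have h2 : 0 ≤ pr μ (fun ω : α × Bool × Bool => ω.1 = a1 ∧ ω.2.1 = false) * q0 :=
      mul_nonneg (pr_nonneg μ hnn _) hq0nn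
    linarith
  have hM0 : 0 < M := lt_of_lt_of_le hca1 (Finset.le_sup' c (Finset.mem_univ a1))
  have hca0 : c a0 < 1 := by
    rw [hcform a0, div_lt_one (hA a0)]
    have h1 : pr μ (fun ω : α × Bool × Bool => ω.1 = a0 ∧ ω.2.1 = false) * q0 <
        pr μ (fun ω : α × Bool × Bool => ω.1 = a0 ∧ ω.2.1 = false) :=
      mul_lt_of_lt_one_right ha0 hq0lt1
    have h2 : pr μ (fun ω : α × Bool × Bool => ω.1 = a0 ∧ ω.2.1 = true) * q1 ≤
        pr μ (fun ω : α × Bool × Bool => ω.1 = a0 ∧ ω.2.1 = true) :=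
      mul_le_of_le_one_right (pr_nonneg μ hnn _) hq1le1
    have := hwa a0
    linarith
  have hm1 : m < 1 := lt_of_le_of_lt (Finset.inf'_le c (Finset.mem_univ a0)) hca0
  have hYeq : pY = (1 - p) * q0 + p * q1 := by
    have := hYdec y
    rw [hpf] at this
    linarith
  refine ⟨hM0, hm1, ?_, ?_⟩
  · rw [div_le_iff₀ (by linarith : (0:ℝ) < 1 - m)]
    nlinarith [mul_le_mul_of_nonneg_left hmge h1p.le, mul_le_mul_of_nonneg_left hq1le1 hp0.le]
  · rw [le_div_iff₀ hM0]
    have h1 : p * M ≤ p * q1 := mul_le_mul_of_nonneg_left hMle hp0.le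
    have h2 : 0 ≤ (1 - p) * q0 := mul_nonneg h1p.le hq0nn
    linarith
end

section
/- Let α be a nonempty finite type, w : α → ℝ with w(a) > 0 for all a and Σ_a w(a) = 1, and c : α → ℝ with 0 ≤ c(a) ≤ 1 for all a. Set p₁ := Σ_a w(a)·c(a), p₀ := 1 − p₁, m := min_a c(a), M := max_a c(a), m' := min_a (1 − c(a)) = 1 − M, M' := max_a (1 − c(a)) = 1 − m. Assume 0 < p₁ < 1. Then for every real r with 0 < r < 1 lying in [(p₁ − m)/(1 − m), p₁/M] ∪ [(p₀ − m')/(1 − m'), p₀/M'], there exists a probability distribution μ on α × Bool × Bool with coordinates A, X, Y such that: μ(A=a) = w(a) for all a, P(Y=1|A=a) = c(a) for all a, A and Y are conditionally independent given X, X and Y are not independent, and P(X=1) = r. (Proposition 3, sharpness of the bounds.) -/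
/-!
Realise `(A, X, Y)` as a Markov chain `A → X → Y` with `X ∣ A = a ∼ Bernoulli (t a)` and
`Y ∣ X = x ∼ Bernoulli (q_x)`, `q₀ ≠ q₁`. Conditional independence of `A` and `Y` given `X` is
then built in, `X` and `Y` are dependent, `P(X = 1) = ∑ w t` and
`P(Y = 1 ∣ A = a) = (1 - t a) q₀ + t a q₁`. So it suffices to find `0 ≤ q₀ ≤ m ≤ M ≤ q₁ ≤ 1` with
`(1 - r) q₀ + r q₁ = p₁`, and to let `t a` be the barycentric coordinate of `c a` in `[q₀, q₁]`.
For `r ≥ p₁` take `(q₀, q₁) = (0, p₁ / r)`, for `r < p₁` take `((p₁ - r) / (1 - r), 1)`: the bounds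
`(p₁ - m) / (1 - m) ≤ r ≤ p₁ / M` say exactly that these endpoints enclose `[m, M]`. The second
interval is the first one for `1 - c`, that is, with the values of `Y` swapped.
-/

open Finset Set

section Pr

variable {α β : Type*} [Fintype α] [Fintype β]

lemma pr_eq_sum_ite (μ : α → ℝ) (E : α → Prop) [DecidablePred E] :
    pr μ E = ∑ ω, if E ω then μ ω else 0 := by
  unfold pr
  congr!

lemma pr_fst_eq_and (μ : α × β → ℝ) (a : α) (F : β → Prop) :
    pr μ (fun ω => ω.1 = a ∧ F ω.2) = pr (fun b => μ (a, b)) F := by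
  classical
  rw [pr_eq_sum_ite, pr_eq_sum_ite, Fintype.sum_prod_type, sum_eq_single a]
  · simp
  · intro a' _ ha'
    simp [ha']
  · simp

lemma pr_snd (μ : α × β → ℝ) (F : β → Prop) :
    pr μ (fun ω => F ω.2) = pr (fun b => ∑ a, μ (a, b)) F := by
  classical
  rw [pr_eq_sum_ite, pr_eq_sum_ite, Fintype.sum_prod_type, sum_comm]
  refine sum_congr rfl fun b _ => ?_
  by_cases hb : F b <;> simp [hb]

end Pr

def bernoulliMass (p : ℝ) (b : Bool) : ℝ := bif b then p else 1 - p

@[simp] lemma bernoulliMass_true (p : ℝ) : bernoulliMass p true = p := rfl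
@[simp] lemma bernoulliMass_false (p : ℝ) : bernoulliMass p false = 1 - p := rfl

lemma bernoulliMass_nonneg {p : ℝ} (hp : p ∈ Icc (0 : ℝ) 1) (b : Bool) : 0 ≤ bernoulliMass p b := by
  cases b <;> simp [hp.1, hp.2]

section MarkovChain

variable {α : Type*} (w t : α → ℝ) (q₀ q₁ : ℝ)

noncomputable def markovChain (ω : α × Bool × Bool) : ℝ :=
  w ω.1 * bernoulliMass (t ω.1) ω.2.1 * bernoulliMass (bif ω.2.1 then q₁ else q₀) ω.2.2

variable {w t q₀ q₁} in
lemma markovChain_nonneg (hw : ∀ a, 0 ≤ w a)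
    (ht : ∀ a, t a ∈ Icc (0 : ℝ) 1) (hq₀ : q₀ ∈ Icc (0 : ℝ) 1) (hq₁ : q₁ ∈ Icc (0 : ℝ) 1)
    (ω : α × Bool × Bool) : 0 ≤ markovChain w t q₀ q₁ ω := by
  obtain ⟨a, x, y⟩ := ω
  cases x <;>
    exact mul_nonneg (mul_nonneg (hw a) (bernoulliMass_nonneg (ht a) _))
      (bernoulliMass_nonneg ‹_› _)

variable [Fintype α]

variable {w} in
lemma sum_markovChain (hwsum : ∑ a, w a = 1) : ∑ ω, markovChain w t q₀ q₁ ω = 1 := by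
  rw [Fintype.sum_prod_type, ← hwsum]
  refine sum_congr rfl fun a _ => ?_
  simp [Fintype.sum_prod_type, markovChain]
  ring

lemma pr_markovChain_A (a : α) : pr (markovChain w t q₀ q₁) (fun ω => ω.1 = a) = w a := by
  have h := pr_fst_eq_and (markovChain w t q₀ q₁) a fun _ => True
  simp only [and_true] at h
  rw [h]
  simp [pr, Fintype.sum_prod_type, markovChain]
  ring

lemma pr_markovChain_Y_A (a : α) :
    pr (markovChain w t q₀ q₁) (fun ω => ω.2.2 = true ∧ ω.1 = a) =
      w a * ((1 - t a) * q₀ + t a * q₁) := by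
  simp only [and_comm (a := _ = true)]
  refine (pr_fst_eq_and _ a fun b : Bool × Bool => b.2 = true).trans ?_
  simp [pr, Fintype.sum_prod_type, markovChain]
  ring

lemma pr_markovChain_A_X (a : α) (x : Bool) :
    pr (markovChain w t q₀ q₁) (fun ω => ω.1 = a ∧ ω.2.1 = x) = w a * bernoulliMass (t a) x := by
  refine (pr_fst_eq_and _ a fun b : Bool × Bool => b.1 = x).trans ?_
  cases x <;> simp [pr, Fintype.sum_prod_type, markovChain] <;> ring

lemma pr_markovChain_fst_snd_fst (a : α) (x y : Bool) :
    pr (markovChain w t q₀ q₁) (fun ω => (ω.1 = a ∧ ω.2.2 = y) ∧ ω.2.1 = x) =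
      markovChain w t q₀ q₁ (a, x, y) := by
  simp only [and_assoc]
  refine (pr_fst_eq_and _ a fun b : Bool × Bool => b.2 = y ∧ b.1 = x).trans ?_
  cases x <;> cases y <;> simp [pr, Fintype.sum_prod_type]

lemma pr_markovChain_X (x : Bool) :
    pr (markovChain w t q₀ q₁) (fun ω => ω.2.1 = x) = ∑ a, w a * bernoulliMass (t a) x := by
  refine (pr_snd _ fun b : Bool × Bool => b.1 = x).trans ?_
  cases x <;> simp [pr, Fintype.sum_prod_type, markovChain, ← sum_add_distrib] <;> ring_nf

variable {w} in
lemma pr_markovChain_X_false (hwsum : ∑ a, w a = 1) :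
    pr (markovChain w t q₀ q₁) (fun ω => ω.2.1 = false) = 1 - ∑ a, w a * t a := by
  simp [pr_markovChain_X, mul_sub, sum_sub_distrib, hwsum]

lemma pr_markovChain_Y_X (x y : Bool) :
    pr (markovChain w t q₀ q₁) (fun ω => ω.2.2 = y ∧ ω.2.1 = x) =
      pr (markovChain w t q₀ q₁) (fun ω => ω.2.1 = x) *
        bernoulliMass (bif x then q₁ else q₀) y := by
  rw [pr_markovChain_X]
  refine (pr_snd _ fun b : Bool × Bool => b.2 = y ∧ b.1 = x).trans ?_
  cases x <;> cases y <;> simp [pr, Fintype.sum_prod_type, markovChain, sum_mul]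

lemma cpr_markovChain_condIndep (a : α) (y x : Bool) :
    cpr (markovChain w t q₀ q₁) (fun ω => ω.1 = a ∧ ω.2.2 = y) (fun ω => ω.2.1 = x) =
      cpr (markovChain w t q₀ q₁) (fun ω => ω.1 = a) (fun ω => ω.2.1 = x) *
        cpr (markovChain w t q₀ q₁) (fun ω => ω.2.2 = y) (fun ω => ω.2.1 = x) := by
  simp only [cpr, pr_markovChain_fst_snd_fst, pr_markovChain_A_X, pr_markovChain_Y_X]
  by_cases hx : pr (markovChain w t q₀ q₁) (fun ω => ω.2.1 = x) = 0
  · simp [hx]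
  · field_simp
    simp [markovChain]

/-- Independence would force `q₀ = P(Y = 1) = q₁`. -/
lemma markovChain_not_indep (hq : q₀ ≠ q₁)
    (h₀ : 0 < pr (markovChain w t q₀ q₁) (fun ω => ω.2.1 = false))
    (h₁ : 0 < pr (markovChain w t q₀ q₁) (fun ω => ω.2.1 = true)) :
    ¬ ∀ x y : Bool, pr (markovChain w t q₀ q₁) (fun ω => ω.2.1 = x ∧ ω.2.2 = y) =
      pr (markovChain w t q₀ q₁) (fun ω => ω.2.1 = x) *
        pr (markovChain w t q₀ q₁) (fun ω => ω.2.2 = y) := by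
  intro hindep
  have hY : ∀ x, 0 < pr (markovChain w t q₀ q₁) (fun ω => ω.2.1 = x) →
      (bif x then q₁ else q₀) = pr (markovChain w t q₀ q₁) (fun ω => ω.2.2 = true) := by
    intro x hx
    have h := hindep x true
    simp only [and_comm (a := _ = x), pr_markovChain_Y_X] at h
    simpa using mul_left_cancel₀ hx.ne' h
  exact hq ((hY false h₀).trans (hY true h₁).symm)

end MarkovChain

lemma exists_mixture_endpoints (p r m M : ℝ) (hm0 : 0 ≤ m) (hM1 : M ≤ 1) (hmp : m ≤ p) (hpM : p ≤ M)
    (hp0 : 0 < p) (hp1 : p < 1) (hr0 : 0 < r) (hr1 : r < 1)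
    (hr : r ∈ Icc ((p - m) / (1 - m)) (p / M)) :
    ∃ q₀ q₁ : ℝ, 0 ≤ q₀ ∧ q₀ ≤ m ∧ M ≤ q₁ ∧ q₁ ≤ 1 ∧ q₀ < q₁ ∧ (1 - r) * q₀ + r * q₁ = p := by
  have hlow : p - m ≤ r * (1 - m) := (div_le_iff₀ (by linarith)).1 hr.1
  have hhigh : r * M ≤ p := (le_div_iff₀ (by linarith)).1 hr.2
  have h1r : 0 < 1 - r := sub_pos.2 hr1
  rcases le_or_gt p r with hpr | hrp
  · refine ⟨0, p / r, le_rfl, hm0, (le_div_iff₀ hr0).2 (by linarith), div_le_one_of_le₀ hpr hr0.le,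
      div_pos hp0 hr0, by field_simp; ring⟩
  · refine ⟨(p - r) / (1 - r), 1, div_nonneg (by linarith) h1r.le,
      (div_le_iff₀ h1r).2 (by linarith), hM1, le_rfl, (div_lt_one h1r).2 (by linarith),
      by field_simp; ring⟩

section WeightedMean

variable {α : Type*} [Fintype α] {w : α → ℝ}

lemma le_sum_mul_of_forall_le (hw : ∀ a, 0 ≤ w a) (hwsum : ∑ a, w a = 1) {c : α → ℝ} {m : ℝ}
    (h : ∀ a, m ≤ c a) : m ≤ ∑ a, w a * c a :=
  calc m = ∑ a, w a * m := by rw [← sum_mul, hwsum, one_mul]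
    _ ≤ _ := sum_le_sum fun a _ => mul_le_mul_of_nonneg_left (h a) (hw a)

lemma sum_mul_le_of_forall_le (hw : ∀ a, 0 ≤ w a) (hwsum : ∑ a, w a = 1) {c : α → ℝ} {M : ℝ}
    (h : ∀ a, c a ≤ M) : ∑ a, w a * c a ≤ M :=
  calc _ ≤ ∑ a, w a * M := sum_le_sum fun a _ => mul_le_mul_of_nonneg_left (h a) (hw a)
    _ = M := by rw [← sum_mul, hwsum, one_mul]

end WeightedMean

lemma exists_markovChain_params {α : Type*} [Fintype α] [Nonempty α] (w c : α → ℝ)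
    (hw : ∀ a, 0 ≤ w a) (hwsum : ∑ a, w a = 1) (hc : ∀ a, c a ∈ Icc (0 : ℝ) 1)
    (p m M r : ℝ) (hp : p = ∑ a, w a * c a)
    (hm : m = univ.inf' univ_nonempty c) (hM : M = univ.sup' univ_nonempty c)
    (hp0 : 0 < p) (hp1 : p < 1) (hr0 : 0 < r) (hr1 : r < 1)
    (hr : r ∈ Icc ((p - m) / (1 - m)) (p / M)) :
    ∃ (q₀ q₁ : ℝ) (t : α → ℝ), q₀ ∈ Icc (0 : ℝ) 1 ∧ q₁ ∈ Icc (0 : ℝ) 1 ∧ q₀ ≠ q₁ ∧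
      (∀ a, t a ∈ Icc (0 : ℝ) 1) ∧ (∀ a, c a = (1 - t a) * q₀ + t a * q₁) ∧
      ∑ a, w a * t a = r := by
  have hmc : ∀ a, m ≤ c a := fun a => hm ▸ inf'_le _ (mem_univ a)
  have hcM : ∀ a, c a ≤ M := fun a => hM ▸ le_sup' _ (mem_univ a)
  obtain ⟨q₀, q₁, hq₀, hq₀m, hMq₁, hq₁, hlt, hmix⟩ := exists_mixture_endpoints p r m M
    (hm ▸ le_inf' _ _ fun a _ => (hc a).1) (hM ▸ sup'_le _ _ fun a _ => (hc a).2)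
    (hp ▸ le_sum_mul_of_forall_le hw hwsum hmc) (hp ▸ sum_mul_le_of_forall_le hw hwsum hcM)
    hp0 hp1 hr0 hr1 hr
  have hd : 0 < q₁ - q₀ := sub_pos.2 hlt
  refine ⟨q₀, q₁, fun a => (c a - q₀) / (q₁ - q₀), ⟨hq₀, by linarith⟩, ⟨by linarith, hq₁⟩,
    hlt.ne,
    fun a => ⟨div_nonneg (by linarith [hmc a]) hd.le, (div_le_one hd).2 (by linarith [hcM a])⟩,
    fun a => by field_simp; ring, ?_⟩
  calc ∑ a, w a * ((c a - q₀) / (q₁ - q₀)) = (p - q₀) / (q₁ - q₀) := by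
        simp_rw [mul_div_assoc', ← sum_div, mul_sub, sum_sub_distrib, ← sum_mul, hwsum, one_mul, hp]
    _ = r := by rw [← hmix]; field_simp; ring

/-- Proposition 3 (sharpness of the bounds). -/
theorem stmt1 {α : Type*} [Fintype α] [Nonempty α]
    (w : α → ℝ) (hw : ∀ a, 0 < w a) (hwsum : ∑ a, w a = 1)
    (c : α → ℝ) (hc : ∀ a, c a ∈ Set.Icc (0:ℝ) 1)
    (p₁ p₀ m M m' M' : ℝ)
    (hp₁ : p₁ = ∑ a, w a * c a) (hp₀ : p₀ = 1 - p₁)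
    (hm : m = Finset.univ.inf' Finset.univ_nonempty c)
    (hM : M = Finset.univ.sup' Finset.univ_nonempty c)
    (hm' : m' = Finset.univ.inf' Finset.univ_nonempty (fun a => 1 - c a))
    (hM' : M' = Finset.univ.sup' Finset.univ_nonempty (fun a => 1 - c a))
    (hp₁pos : 0 < p₁) (hp₁lt : p₁ < 1)
    (r : ℝ) (hr0 : 0 < r) (hr1 : r < 1)
    (hr : r ∈ Set.Icc ((p₁ - m) / (1 - m)) (p₁ / M) ∪
            Set.Icc ((p₀ - m') / (1 - m')) (p₀ / M')) :
    ∃ μ : α × Bool × Bool → ℝ,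
      (∀ ω, 0 ≤ μ ω) ∧ (∑ ω, μ ω = 1) ∧
      (∀ a : α, pr μ (fun ω => ω.1 = a) = w a) ∧
      (∀ a : α, cpr μ (fun ω => ω.2.2 = true) (fun ω => ω.1 = a) = c a) ∧
      (∀ (a : α) (y x : Bool), 0 < pr μ (fun ω => ω.2.1 = x) →
        cpr μ (fun ω => ω.1 = a ∧ ω.2.2 = y) (fun ω => ω.2.1 = x) =
          cpr μ (fun ω => ω.1 = a) (fun ω => ω.2.1 = x) *
            cpr μ (fun ω => ω.2.2 = y) (fun ω => ω.2.1 = x)) ∧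
      (¬ ∀ x y : Bool,
        pr μ (fun ω => ω.2.1 = x ∧ ω.2.2 = y) =
          pr μ (fun ω => ω.2.1 = x) * pr μ (fun ω => ω.2.2 = y)) ∧
      pr μ (fun ω => ω.2.1 = true) = r := by
  have hw₀ : ∀ a, 0 ≤ w a := fun a => (hw a).le
  obtain ⟨q₀, q₁, t, hq₀, hq₁, hq, ht, hct, htr⟩ : ∃ (q₀ q₁ : ℝ) (t : α → ℝ),
      q₀ ∈ Icc (0 : ℝ) 1 ∧ q₁ ∈ Icc (0 : ℝ) 1 ∧ q₀ ≠ q₁ ∧ (∀ a, t a ∈ Icc (0 : ℝ) 1) ∧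
        (∀ a, c a = (1 - t a) * q₀ + t a * q₁) ∧ ∑ a, w a * t a = r := by
    rcases hr with hr | hr
    · exact exists_markovChain_params w c hw₀ hwsum hc p₁ m M r hp₁ hm hM hp₁pos hp₁lt hr0 hr1 hr
    · obtain ⟨q₀, q₁, t, hq₀, hq₁, hq, ht, hct, htr⟩ :=
        exists_markovChain_params w (fun a => 1 - c a) hw₀ hwsum
          (fun a => ⟨by linarith [(hc a).2], by linarith [(hc a).1]⟩) p₀ m' M' r
          (by simp [mul_sub, sum_sub_distrib, hwsum, hp₀, hp₁]) hm' hM' (by linarith) (by linarith)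
          hr0 hr1 hr
      exact ⟨1 - q₀, 1 - q₁, t, ⟨by linarith [hq₀.2], by linarith [hq₀.1]⟩,
        ⟨by linarith [hq₁.2], by linarith [hq₁.1]⟩, fun h => hq (by linarith), ht,
        fun a => by linear_combination -(hct a), htr⟩
  have hX₁ : pr (markovChain w t q₀ q₁) (fun ω => ω.2.1 = true) = r := by
    simpa [pr_markovChain_X] using htr
  have hX₀ : pr (markovChain w t q₀ q₁) (fun ω => ω.2.1 = false) = 1 - r := by
    rw [pr_markovChain_X_false _ _ _ hwsum, htr]
  refine ⟨markovChain w t q₀ q₁, markovChain_nonneg hw₀ ht hq₀ hq₁, sum_markovChain _ _ _ hwsum,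
    pr_markovChain_A _ _ _ _, fun a => ?_, fun a y x _ => cpr_markovChain_condIndep _ _ _ _ a y x,
    markovChain_not_indep _ _ _ _ hq (by linarith) (by linarith), hX₁⟩
  rw [cpr, pr_markovChain_Y_A, pr_markovChain_A, hct a]
  exact mul_div_cancel_left₀ _ (hw a).ne'
end

section
/- Let α be a nonempty finite type, w : α → ℝ with w(a) > 0 for all a and Σ_a w(a) = 1, and p : α → ℝ. Set p₁ := Σ_a w(a)·p(a), m := min_a p(a), M := max_a p(a). Let q₀, q₁ be reals with 0 ≤ q₀ ≤ m, M ≤ q₁ ≤ 1, q₀ < q₁, and suppose M > 0 and m < 1. Then (p₁ − m)/(1 − m) ≤ (p₁ − q₀)/(q₁ − q₀) ≤ p₁/M. (Extremal-value lemma for the objective of the linear program in the proof of Proposition 3.) -/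
/-- Extremal-value lemma for the objective of the linear program in the proof
of Proposition 3. -/
theorem stmt7 {α : Type*} [Fintype α] [Nonempty α]
    (w : α → ℝ) (hw : ∀ a, 0 < w a) (hwsum : ∑ a, w a = 1)
    (p : α → ℝ) (p₁ m M : ℝ)
    (hp₁ : p₁ = ∑ a, w a * p a)
    (hm : m = Finset.univ.inf' Finset.univ_nonempty p)
    (hM : M = Finset.univ.sup' Finset.univ_nonempty p)
    (q₀ q₁ : ℝ) (hq₀0 : 0 ≤ q₀) (hq₀m : q₀ ≤ m) (hMq₁ : M ≤ q₁) (hq₁1 : q₁ ≤ 1)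
    (hq : q₀ < q₁) (hMpos : 0 < M) (hmlt : m < 1) :
    (p₁ - m) / (1 - m) ≤ (p₁ - q₀) / (q₁ - q₀) ∧
      (p₁ - q₀) / (q₁ - q₀) ≤ p₁ / M := by
  have hmle : m ≤ p₁ := by
    rw [hp₁]
    calc m = ∑ a, w a * m := by
            rw [← Finset.sum_mul, hwsum, one_mul]
      _ ≤ ∑ a, w a * p a := by
            apply Finset.sum_le_sum
            intro a _
            exact mul_le_mul_of_nonneg_left
              (hm ▸ Finset.inf'_le p (Finset.mem_univ a)) (hw a).le
  have hMge : p₁ ≤ M := by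
    rw [hp₁]
    calc ∑ a, w a * p a ≤ ∑ a, w a * M := by
            apply Finset.sum_le_sum
            intro a _
            exact mul_le_mul_of_nonneg_left
              (hM ▸ Finset.le_sup' p (Finset.mem_univ a)) (hw a).le
      _ = M := by rw [← Finset.sum_mul, hwsum, one_mul]
  have h1m : (0:ℝ) < 1 - m := by linarith
  have hqq : (0:ℝ) < q₁ - q₀ := by linarith
  constructor
  · rw [div_le_div_iff₀ h1m hqq]
    nlinarith [mul_nonneg (by linarith : (0:ℝ) ≤ p₁ - m) (by linarith : (0:ℝ) ≤ 1 - q₁),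
      mul_nonneg (by linarith : (0:ℝ) ≤ m - q₀) (by linarith : (0:ℝ) ≤ 1 - p₁)]
  · rw [div_le_div_iff₀ hqq hMpos]
    nlinarith [mul_nonneg hq₀0 (by linarith : (0:ℝ) ≤ M - p₁),
      mul_nonneg (by linarith : (0:ℝ) ≤ p₁) (by linarith : (0:ℝ) ≤ q₁ - M)]
end

section
/- Let α be a nonempty finite type, w : α → ℝ with w(a) > 0 for all a and Σ_a w(a) = 1, and c : α → ℝ with 0 ≤ c(a) ≤ 1 for all a. Set p₁ := Σ_a w(a)·c(a), m := min_a c(a), M := max_a c(a), and assume 0 < p₁ < 1. Then for every real r in the closed interval [(p₁ − m)/(1 − m), p₁/M], there exist q₀, q₁ ∈ [0,1] with q₀ < q₁ and a function π : α → ℝ with 0 ≤ π(a) ≤ 1 for all a, such that c(a) = q₀·(1 − π(a)) + q₁·π(a) for all a ∈ α and Σ_a w(a)·π(a) = r. (Attainability of every value in the sub-region bound of Proposition 3.) -/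
/-!
Since `m ≤ c a ≤ M`, it suffices to find levels `0 ≤ q₀ ≤ m` and `M ≤ q₁ ≤ 1` with
`(1 - r) q₀ + r q₁ = p₁`: then `π a := (c a - q₀) / (q₁ - q₀)` lies in `[0, 1]`, reproduces `c`,
and its `w`-average is `(p₁ - q₀) / (q₁ - q₀) = r`. For `r ≥ p₁` take `q₀ = 0, q₁ = p₁ / r`, and
for `r < p₁` take `q₀ = (p₁ - r) / (1 - r), q₁ = 1`; the two ends of the interval for `r` are
exactly the constraints `q₁ ≥ M` and `q₀ ≤ m`.
-/

open Finset

theorem exists_affine_interpolation {ι : Type*} [Fintype ι] (w c : ι → ℝ) (hw : ∑ i, w i = 1)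
    {q₀ q₁ r : ℝ} (hq : q₀ < q₁) (hc : ∀ i, c i ∈ Set.Icc q₀ q₁)
    (hr : (1 - r) * q₀ + r * q₁ = ∑ i, w i * c i) :
    ∃ π : ι → ℝ, (∀ i, 0 ≤ π i ∧ π i ≤ 1) ∧ (∀ i, c i = q₀ * (1 - π i) + q₁ * π i) ∧
      ∑ i, w i * π i = r := by
  have hgap : 0 < q₁ - q₀ := sub_pos.mpr hq
  refine ⟨fun i => (c i - q₀) / (q₁ - q₀), fun i => ?_, fun i => ?_, ?_⟩
  · exact ⟨div_nonneg (by linarith [(hc i).1]) hgap.le,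
      (div_le_one hgap).mpr (by linarith [(hc i).2])⟩
  · field_simp
    ring
  · have hsum : ∑ i, w i * ((c i - q₀) / (q₁ - q₀)) = (∑ i, w i * c i - q₀) / (q₁ - q₀) := by
      simp only [← mul_div_assoc, ← Finset.sum_div, mul_sub, Finset.sum_sub_distrib,
        ← Finset.sum_mul, hw, one_mul]
    rw [hsum, div_eq_iff hgap.ne', ← hr]
    ring

theorem exists_levels_of_mem_Icc {m M p r : ℝ} (hm : 0 ≤ m) (hM : M ≤ 1) (hmp : m ≤ p)
    (hpM : p ≤ M) (hp₀ : 0 < p) (hp₁ : p < 1) (hr : r ∈ Set.Icc ((p - m) / (1 - m)) (p / M)) :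
    ∃ q₀ q₁ : ℝ, 0 ≤ q₀ ∧ q₀ ≤ m ∧ M ≤ q₁ ∧ q₁ ≤ 1 ∧ q₀ < q₁ ∧ (1 - r) * q₀ + r * q₁ = p := by
  have hM₀ : 0 < M := hp₀.trans_le hpM
  have hm₁ : 0 < 1 - m := by linarith
  have hrM : r * M ≤ p := (le_div_iff₀ hM₀).mp hr.2
  have hrm : p - m ≤ r * (1 - m) := (div_le_iff₀ hm₁).mp hr.1
  rcases le_or_gt p r with hpr | hrp
  · have hr₀ : 0 < r := hp₀.trans_le hpr
    refine ⟨0, p / r, le_rfl, hm, (le_div_iff₀ hr₀).mpr (by linarith),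
      (div_le_one hr₀).mpr hpr, div_pos hp₀ hr₀, ?_⟩
    field_simp
    ring
  · have hr₁ : 0 < 1 - r := by linarith
    refine ⟨(p - r) / (1 - r), 1, div_nonneg (by linarith) hr₁.le,
      (div_le_iff₀ hr₁).mpr (by linarith), hM, le_rfl, (div_lt_one hr₁).mpr (by linarith), ?_⟩
    field_simp
    ring

/-- Attainability of every value in the sub-region bound of Proposition 3. -/
theorem stmt10 {α : Type*} [Fintype α] [Nonempty α]
    (w : α → ℝ) (hw : ∀ a, 0 < w a) (hwsum : ∑ a, w a = 1)
    (c : α → ℝ) (hc : ∀ a, c a ∈ Set.Icc (0:ℝ) 1)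
    (p₁ m M : ℝ)
    (hp₁ : p₁ = ∑ a, w a * c a)
    (hm : m = Finset.univ.inf' Finset.univ_nonempty c)
    (hM : M = Finset.univ.sup' Finset.univ_nonempty c)
    (hp₁pos : 0 < p₁) (hp₁lt : p₁ < 1)
    (r : ℝ) (hr : r ∈ Set.Icc ((p₁ - m) / (1 - m)) (p₁ / M)) :
    ∃ q₀ q₁ : ℝ, q₀ ∈ Set.Icc (0:ℝ) 1 ∧ q₁ ∈ Set.Icc (0:ℝ) 1 ∧ q₀ < q₁ ∧
      ∃ π : α → ℝ, (∀ a, 0 ≤ π a ∧ π a ≤ 1) ∧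
        (∀ a, c a = q₀ * (1 - π a) + q₁ * π a) ∧
        ∑ a, w a * π a = r := by
  have hw₀ : ∀ a ∈ univ, 0 ≤ w a := fun a _ => (hw a).le
  have hw₁ : 0 < ∑ a, w a := hwsum ▸ one_pos
  have hp₁_centerMass : univ.centerMass w c = p₁ := by
    rw [hp₁, centerMass_eq_of_sum_1 _ _ hwsum]
    rfl
  have hmc : ∀ a, m ≤ c a := fun a => hm ▸ inf'_le c (mem_univ a)
  have hcM : ∀ a, c a ≤ M := fun a => hM ▸ le_sup' c (mem_univ a)
  obtain ⟨a₀, -, ha₀⟩ := exists_mem_eq_inf' univ_nonempty c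
  obtain ⟨a₁, -, ha₁⟩ := exists_mem_eq_sup' univ_nonempty c
  obtain ⟨q₀, q₁, hq₀, hq₀m, hMq₁, hq₁, hlt, hmix⟩ :=
    exists_levels_of_mem_Icc (hm ▸ ha₀ ▸ (hc a₀).1) (hM ▸ ha₁ ▸ (hc a₁).2)
      (hm ▸ hp₁_centerMass ▸ inf_le_centerMass hw₀ hw₁) (hM ▸ hp₁_centerMass ▸ centerMass_le_sup hw₀ hw₁)
      hp₁pos hp₁lt hr
  exact ⟨q₀, q₁, ⟨hq₀, by linarith⟩, ⟨by linarith, hq₁⟩, hlt,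
    exists_affine_interpolation w c hwsum hlt
      (fun a => ⟨hq₀m.trans (hmc a), (hcM a).trans hMq₁⟩) (hp₁ ▸ hmix)⟩
end
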